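/- Let (H,R) be quasitriangular and V, V̄ as above. In Yetter–Drinfeld modules over H, the composite c_{V̄,V} ∘ c_{V,V̄} : V ⊗ V̄ → V ⊗ V̄ of the two braidings is the identity map. -/
import Mathlib


open scoped TensorProduct

structure QuasiTriangular (k H : Type*) [CommRing k] [Ring H] [HopfAlgebra k H] where
  R : H ⊗[k] H
  Sinv : H →ₗ[k] H
  Sinv_antipode : ∀ h : H, Sinv (HopfAlgebra.antipode (R := k) h) = h
  antipode_Sinv : ∀ h : H, HopfAlgebra.antipode (R := k) (Sinv h) = h
  comul_fst : (TensorProduct.assoc k H H H)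
      ((TensorProduct.map (Coalgebra.comul (R := k)) LinearMap.id) R)
    = (Algebra.TensorProduct.map (AlgHom.id k H) Algebra.TensorProduct.includeRight) R *
      Algebra.TensorProduct.includeRight R
  comul_snd : (TensorProduct.map LinearMap.id (Coalgebra.comul (R := k))) R
    = (Algebra.TensorProduct.map (AlgHom.id k H) Algebra.TensorProduct.includeRight) R *
      (Algebra.TensorProduct.map (AlgHom.id k H) Algebra.TensorProduct.includeLeft) R
  counit_fst : (TensorProduct.lid k H)
      ((TensorProduct.map (Coalgebra.counit (R := k)) LinearMap.id) R) = 1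
  counit_snd : (TensorProduct.rid k H)
      ((TensorProduct.map LinearMap.id (Coalgebra.counit (R := k))) R) = 1
  intertwine : ∀ h : H, (TensorProduct.comm k H H) (Coalgebra.comul (R := k) h) * R
    = R * Coalgebra.comul (R := k) h


section ModuleDefs

variable (k H : Type*) [CommRing k] [Ring H] [HopfAlgebra k H]
variable (M : Type*) [AddCommGroup M] [Module k M] [Module H M]
  [IsScalarTower k H M] [SMulCommClass k H M]

/-- The `k`-linear action of `h : H` on a module `M`. -/
def smulLin (h : H) : M →ₗ[k] M where
  toFun x := h • x
  map_add' x y := smul_add h x y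
  map_smul' c x := (smul_comm c h x).symm

/-- The coaction `m ↦ R² ⊗ R¹ • m` of `H` on an `H`-module `M`, via the `R`-matrix. -/
noncomputable def rCoaction (Q : QuasiTriangular k H) (m : M) : H ⊗[k] M :=
  (TensorProduct.comm k M H)
    ((TensorProduct.map
      { toFun := fun h : H => h • m
        map_add' := fun h h' => add_smul h h' m
        map_smul' := fun c h => by simp [smul_assoc] }
      (LinearMap.id : H →ₗ[k] H)) Q.R)

/-- The action of `H` on the dual module `V̄ = V*`: `⟨h • y, x⟩ = ⟨y, S(h) • x⟩`. -/
noncomputable def dualAct (h : H) (y : Module.Dual k M) : Module.Dual k M :=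
  y ∘ₗ smulLin k H M (HopfAlgebra.antipode (R := k) h)

end ModuleDefs


section AuxQT

open TensorProduct

variable {k H : Type*} [CommRing k] [Ring H] [HopfAlgebra k H] (Q : QuasiTriangular k H)

local notation "𝓢" => (HopfAlgebra.antipode (R := k) (A := H))

lemma QT_antipode_one : 𝓢 (1 : H) = 1 := by
  simpa [Algebra.TensorProduct.one_def] using
    HopfAlgebra.mul_antipode_rTensor_comul_apply (R := k) (A := H) (a := 1)

/-- identity (1): `(S ⊗ id)(R) * R = 1`. -/
lemma QT_ID1 {n m : ℕ} (r1 r2 : Fin n → H) (hr : (∑ i, r1 i ⊗ₜ[k] r2 i) = Q.R)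
    (s1 s2 : Fin m → H) (hs : (∑ j, s1 j ⊗ₜ[k] s2 j) = Q.R) :
    (∑ i, ∑ j, (𝓢 (r1 i) * s1 j) ⊗ₜ[k] (r2 i * s2 j)) = (1:H) ⊗ₜ[k] (1:H) := by
  have hc : (∑ i, Coalgebra.counit (R := k) (r1 i) • r2 i) = (1 : H) := by
    have h0 := Q.counit_fst
    rw [← hr] at h0
    simpa using h0
  have h := congrArg (fun z => (TensorProduct.map
      (LinearMap.mul' k H ∘ₗ LinearMap.rTensor H 𝓢) (LinearMap.id (R := k) (M := H)))
      ((TensorProduct.assoc k H H H).symm z)) Q.comul_fst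
  simp only [LinearEquiv.symm_apply_apply] at h
  nth_rewrite 3 [← hs] at h
  rw [← hr] at h
  simp only [map_sum, TensorProduct.map_tmul, Algebra.TensorProduct.map_tmul,
    Algebra.TensorProduct.includeRight_apply, AlgHom.coe_id, id_eq,
    Finset.sum_mul_sum, Algebra.TensorProduct.tmul_mul_tmul, one_mul, mul_one,
    TensorProduct.assoc_symm_tmul, LinearMap.comp_apply, LinearMap.rTensor_tmul,
    LinearMap.mul'_apply, LinearMap.id_coe,
    HopfAlgebra.mul_antipode_rTensor_comul_apply, Algebra.algebraMap_eq_smul_one,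
    TensorProduct.smul_tmul', TensorProduct.smul_tmul] at h
  rw [← TensorProduct.tmul_sum, hc] at h
  exact h.symm

/-- identity (2): `R * (S ⊗ id)(R) = 1`. -/
lemma QT_ID2 {n m : ℕ} (r1 r2 : Fin n → H) (hr : (∑ i, r1 i ⊗ₜ[k] r2 i) = Q.R)
    (s1 s2 : Fin m → H) (hs : (∑ j, s1 j ⊗ₜ[k] s2 j) = Q.R) :
    (∑ i, ∑ j, (r1 i * 𝓢 (s1 j)) ⊗ₜ[k] (r2 i * s2 j)) = (1:H) ⊗ₜ[k] (1:H) := by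
  have hc : (∑ i, Coalgebra.counit (R := k) (r1 i) • r2 i) = (1 : H) := by
    have h0 := Q.counit_fst
    rw [← hr] at h0
    simpa using h0
  have h := congrArg (fun z => (TensorProduct.map
      (LinearMap.mul' k H ∘ₗ LinearMap.lTensor H 𝓢) (LinearMap.id (R := k) (M := H)))
      ((TensorProduct.assoc k H H H).symm z)) Q.comul_fst
  simp only [LinearEquiv.symm_apply_apply] at h
  nth_rewrite 3 [← hs] at h
  rw [← hr] at h
  simp only [map_sum, TensorProduct.map_tmul, Algebra.TensorProduct.map_tmul,
    Algebra.TensorProduct.includeRight_apply, AlgHom.coe_id, id_eq,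
    Finset.sum_mul_sum, Algebra.TensorProduct.tmul_mul_tmul, one_mul, mul_one,
    TensorProduct.assoc_symm_tmul, LinearMap.comp_apply, LinearMap.lTensor_tmul,
    LinearMap.mul'_apply, LinearMap.id_coe,
    HopfAlgebra.mul_antipode_lTensor_comul_apply, Algebra.algebraMap_eq_smul_one,
    TensorProduct.smul_tmul', TensorProduct.smul_tmul] at h
  rw [← TensorProduct.tmul_sum, hc] at h
  exact h.symm

/-- identity (3) (in `H ⊗ H^op`): `R * (id ⊗ S)(R) = 1`. -/
lemma QT_ID3 {n m : ℕ} (r1 r2 : Fin n → H) (hr : (∑ i, r1 i ⊗ₜ[k] r2 i) = Q.R)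
    (s1 s2 : Fin m → H) (hs : (∑ j, s1 j ⊗ₜ[k] s2 j) = Q.R) :
    (∑ i, ∑ j, (r1 i * s1 j) ⊗ₜ[k] (𝓢 (s2 j) * r2 i)) = (1:H) ⊗ₜ[k] (1:H) := by
  have hc : (∑ i, Coalgebra.counit (R := k) (r2 i) • r1 i) = (1 : H) := by
    have h0 := Q.counit_snd
    rw [← hr] at h0
    simpa using h0
  have h := congrArg (TensorProduct.map (LinearMap.id (R := k) (M := H))
      (LinearMap.mul' k H ∘ₗ LinearMap.rTensor H 𝓢)) Q.comul_snd
  nth_rewrite 3 [← hs] at h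
  rw [← hr] at h
  simp only [map_sum, TensorProduct.map_tmul, Algebra.TensorProduct.map_tmul,
    Algebra.TensorProduct.includeRight_apply, Algebra.TensorProduct.includeLeft_apply,
    AlgHom.coe_id, id_eq,
    Finset.sum_mul_sum, Algebra.TensorProduct.tmul_mul_tmul, one_mul, mul_one,
    LinearMap.comp_apply, LinearMap.rTensor_tmul,
    LinearMap.mul'_apply, LinearMap.id_coe,
    HopfAlgebra.mul_antipode_rTensor_comul_apply, Algebra.algebraMap_eq_smul_one,
    TensorProduct.tmul_smul, TensorProduct.smul_tmul'] at h
  rw [← TensorProduct.sum_tmul, hc] at h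
  exact h.symm

lemma QT_PmulR {n : ℕ} (r1 r2 : Fin n → H) (hr : (∑ i, r1 i ⊗ₜ[k] r2 i) = Q.R) :
    (TensorProduct.map 𝓢 LinearMap.id Q.R) * Q.R = 1 := by
  rw [← hr, map_sum, Finset.sum_mul_sum]
  simp only [TensorProduct.map_tmul, Algebra.TensorProduct.tmul_mul_tmul,
    LinearMap.id_coe, id_eq, Algebra.TensorProduct.one_def]
  exact QT_ID1 Q r1 r2 hr r1 r2 hr

lemma QT_RmulP {n : ℕ} (r1 r2 : Fin n → H) (hr : (∑ i, r1 i ⊗ₜ[k] r2 i) = Q.R) :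
    Q.R * (TensorProduct.map 𝓢 LinearMap.id Q.R) = 1 := by
  rw [← hr, map_sum, Finset.sum_mul_sum]
  simp only [TensorProduct.map_tmul, Algebra.TensorProduct.tmul_mul_tmul,
    LinearMap.id_coe, id_eq, Algebra.TensorProduct.one_def]
  exact QT_ID2 Q r1 r2 hr r1 r2 hr

/-- identity (5): `(S ⊗ id)(R) * (S ⊗ S)(R) = 1`. -/
lemma QT_ID5 {n m : ℕ} (r1 r2 : Fin n → H) (hr : (∑ i, r1 i ⊗ₜ[k] r2 i) = Q.R)
    (s1 s2 : Fin m → H) (hs : (∑ j, s1 j ⊗ₜ[k] s2 j) = Q.R) :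
    (∑ j, ∑ i, (𝓢 (s1 j) * 𝓢 (r1 i)) ⊗ₜ[k] (s2 j * 𝓢 (r2 i))) = (1:H) ⊗ₜ[k] (1:H) := by
  have hPR := QT_PmulR Q r1 r2 hr
  have hRP := QT_RmulP Q r1 r2 hr
  have hc : (∑ i, Coalgebra.counit (R := k) (r2 i) • r1 i) = (1 : H) := by
    have h0 := Q.counit_snd
    rw [← hr] at h0
    simpa using h0
  have hfR : (Algebra.TensorProduct.map (AlgHom.id k H) (Bialgebra.comulAlgHom k H)) Q.R
      = (Algebra.TensorProduct.map (AlgHom.id k H) Algebra.TensorProduct.includeRight) Q.R *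
        (Algebra.TensorProduct.map (AlgHom.id k H) Algebra.TensorProduct.includeLeft) Q.R := by
    rw [← Q.comul_snd, ← hr]
    simp [Algebra.TensorProduct.map_tmul, Bialgebra.comulAlgHom_apply]
  have h1 : (Algebra.TensorProduct.map (AlgHom.id k H) (Bialgebra.comulAlgHom k H)) Q.R *
      ((Algebra.TensorProduct.map (AlgHom.id k H) Algebra.TensorProduct.includeLeft)
          (TensorProduct.map 𝓢 LinearMap.id Q.R) *
        (Algebra.TensorProduct.map (AlgHom.id k H) Algebra.TensorProduct.includeRight)
          (TensorProduct.map 𝓢 LinearMap.id Q.R)) = 1 := by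
    rw [hfR, mul_assoc]
    rw [← mul_assoc ((Algebra.TensorProduct.map (AlgHom.id k H)
        Algebra.TensorProduct.includeLeft) Q.R)]
    rw [← map_mul, hRP, map_one, one_mul, ← map_mul, hRP, map_one]
  have key : (Algebra.TensorProduct.map (AlgHom.id k H) (Bialgebra.comulAlgHom k H))
        (TensorProduct.map 𝓢 LinearMap.id Q.R)
      = (Algebra.TensorProduct.map (AlgHom.id k H) Algebra.TensorProduct.includeLeft)
          (TensorProduct.map 𝓢 LinearMap.id Q.R) *
        (Algebra.TensorProduct.map (AlgHom.id k H) Algebra.TensorProduct.includeRight)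
          (TensorProduct.map 𝓢 LinearMap.id Q.R) := by
    calc (Algebra.TensorProduct.map (AlgHom.id k H) (Bialgebra.comulAlgHom k H))
          (TensorProduct.map 𝓢 LinearMap.id Q.R)
        = (Algebra.TensorProduct.map (AlgHom.id k H) (Bialgebra.comulAlgHom k H))
            (TensorProduct.map 𝓢 LinearMap.id Q.R) *
          ((Algebra.TensorProduct.map (AlgHom.id k H) (Bialgebra.comulAlgHom k H)) Q.R *
            ((Algebra.TensorProduct.map (AlgHom.id k H) Algebra.TensorProduct.includeLeft)
                (TensorProduct.map 𝓢 LinearMap.id Q.R) *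
              (Algebra.TensorProduct.map (AlgHom.id k H) Algebra.TensorProduct.includeRight)
                (TensorProduct.map 𝓢 LinearMap.id Q.R))) := by rw [h1, mul_one]
      _ = ((Algebra.TensorProduct.map (AlgHom.id k H) (Bialgebra.comulAlgHom k H))
            (TensorProduct.map 𝓢 LinearMap.id Q.R) *
          (Algebra.TensorProduct.map (AlgHom.id k H) (Bialgebra.comulAlgHom k H)) Q.R) *
            ((Algebra.TensorProduct.map (AlgHom.id k H) Algebra.TensorProduct.includeLeft)
                (TensorProduct.map 𝓢 LinearMap.id Q.R) *
              (Algebra.TensorProduct.map (AlgHom.id k H) Algebra.TensorProduct.includeRight)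
                (TensorProduct.map 𝓢 LinearMap.id Q.R)) := by rw [mul_assoc]
      _ = (Algebra.TensorProduct.map (AlgHom.id k H) Algebra.TensorProduct.includeLeft)
                (TensorProduct.map 𝓢 LinearMap.id Q.R) *
              (Algebra.TensorProduct.map (AlgHom.id k H) Algebra.TensorProduct.includeRight)
                (TensorProduct.map 𝓢 LinearMap.id Q.R) := by
          rw [← map_mul, hPR, map_one, one_mul]
  -- now apply `id ⊗ (mul ∘ (id ⊗ S))` to `key` and compute both sides elementwise
  have h := congrArg (TensorProduct.map (LinearMap.id (R := k) (M := H))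
      (LinearMap.mul' k H ∘ₗ LinearMap.lTensor H 𝓢)) key
  nth_rewrite 2 [← hs] at h
  rw [← hr] at h
  simp only [map_sum, TensorProduct.map_tmul, Algebra.TensorProduct.map_tmul,
    Algebra.TensorProduct.includeRight_apply, Algebra.TensorProduct.includeLeft_apply,
    AlgHom.coe_id, id_eq, Bialgebra.comulAlgHom_apply,
    Finset.sum_mul_sum, Algebra.TensorProduct.tmul_mul_tmul, one_mul, mul_one,
    LinearMap.comp_apply, LinearMap.lTensor_tmul,
    LinearMap.mul'_apply, LinearMap.id_coe,
    HopfAlgebra.mul_antipode_lTensor_comul_apply, Algebra.algebraMap_eq_smul_one,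
    TensorProduct.tmul_smul, TensorProduct.smul_tmul'] at h
  rw [← TensorProduct.sum_tmul] at h
  rw [show (∑ i, Coalgebra.counit (R := k) (r2 i) • 𝓢 (r1 i)) = 𝓢 (1 : H) by
    rw [← hc, map_sum]; simp, QT_antipode_one] at h
  exact h.symm

lemma QT_mapSS {n m : ℕ} (r1 r2 : Fin n → H) (hr : (∑ i, r1 i ⊗ₜ[k] r2 i) = Q.R)
    (s1 s2 : Fin m → H) (hs : (∑ j, s1 j ⊗ₜ[k] s2 j) = Q.R) :
    TensorProduct.map 𝓢 𝓢 Q.R = Q.R := by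
  have hPSS : (TensorProduct.map 𝓢 LinearMap.id Q.R) * (TensorProduct.map 𝓢 𝓢 Q.R) = 1 := by
    nth_rewrite 2 [← hr]
    rw [← hs, map_sum, map_sum, Finset.sum_mul_sum]
    simp only [TensorProduct.map_tmul, Algebra.TensorProduct.tmul_mul_tmul,
      LinearMap.id_coe, id_eq, Algebra.TensorProduct.one_def]
    exact QT_ID5 Q r1 r2 hr s1 s2 hs
  calc TensorProduct.map 𝓢 𝓢 Q.R
      = (Q.R * (TensorProduct.map 𝓢 LinearMap.id Q.R)) * (TensorProduct.map 𝓢 𝓢 Q.R) := by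
        rw [QT_RmulP Q r1 r2 hr, one_mul]
    _ = Q.R * ((TensorProduct.map 𝓢 LinearMap.id Q.R) * (TensorProduct.map 𝓢 𝓢 Q.R)) := by
        rw [mul_assoc]
    _ = Q.R := by rw [hPSS, mul_one]

/-- The key identity: `∑ S(s¹)r¹ ⊗ S(r²)S(s²) = 1 ⊗ 1`. -/
lemma QT_N {n m : ℕ} (r1 r2 : Fin n → H) (hr : (∑ i, r1 i ⊗ₜ[k] r2 i) = Q.R)
    (s1 s2 : Fin m → H) (hs : (∑ j, s1 j ⊗ₜ[k] s2 j) = Q.R) :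
    (∑ i, ∑ j, (𝓢 (s1 j) * r1 i) ⊗ₜ[k] (𝓢 (r2 i) * 𝓢 (s2 j))) = (1:H) ⊗ₜ[k] (1:H) := by
  let G : H ⊗[k] H →ₗ[k] H ⊗[k] H :=
    TensorProduct.lift (LinearMap.mk₂ k
      (fun u v => ∑ i, (u * r1 i) ⊗ₜ[k] (𝓢 (r2 i) * v))
      (by intros; simp [add_mul, TensorProduct.add_tmul, Finset.sum_add_distrib])
      (by intros; simp [smul_mul_assoc, TensorProduct.smul_tmul', Finset.smul_sum])
      (by intros; simp [mul_add, TensorProduct.tmul_add, Finset.sum_add_distrib])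
      (by intros; simp [mul_smul_comm, TensorProduct.tmul_smul, Finset.smul_sum]))
  have hG1 : G (TensorProduct.map 𝓢 𝓢 Q.R)
      = ∑ j, ∑ i, (𝓢 (s1 j) * r1 i) ⊗ₜ[k] (𝓢 (r2 i) * 𝓢 (s2 j)) := by
    rw [← hs]
    simp [G, TensorProduct.lift.tmul]
  have hG2 : G Q.R = ∑ j, ∑ i, (s1 j * r1 i) ⊗ₜ[k] (𝓢 (r2 i) * s2 j) := by
    rw [← hs]
    simp [G, TensorProduct.lift.tmul]
  rw [Finset.sum_comm, ← hG1, QT_mapSS Q r1 r2 hr s1 s2 hs, hG2]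
  exact QT_ID3 Q s1 s2 hs r1 r2 hr

end AuxQT

section AuxMod
set_option linter.unusedSectionVars false

open TensorProduct

variable {k H : Type*} [CommRing k] [Ring H] [HopfAlgebra k H]
variable {V : Type*} [AddCommGroup V] [Module k V] [Module H V]
  [IsScalarTower k H V] [SMulCommClass k H V]

lemma smulLin_mul (a b : H) :
    smulLin k H V (a * b) = (smulLin k H V a) ∘ₗ (smulLin k H V b) :=
  LinearMap.ext fun z => mul_smul a b z

lemma smulLin_one : smulLin k H V (1 : H) = LinearMap.id :=
  LinearMap.ext fun z => one_smul H z

/-- `h ↦ h • x` as a linear map. -/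
def actL (x : V) : H →ₗ[k] V where
  toFun h := h • x
  map_add' a b := add_smul a b x
  map_smul' c a := by simp [smul_assoc]

/-- `b ↦ y ∘ (b •)` as a linear map. -/
def dualL (y : Module.Dual k V) : H →ₗ[k] Module.Dual k V where
  toFun b := y ∘ₗ smulLin k H V b
  map_add' a b := by
    have : smulLin k H V (a + b) = smulLin k H V a + smulLin k H V b :=
      LinearMap.ext fun z => add_smul a b z
    simp [this, LinearMap.comp_add]
  map_smul' c a := by
    have : smulLin k H V (c • a) = c • smulLin k H V a :=
      LinearMap.ext fun z => smul_assoc c a z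
    simp [this, LinearMap.comp_smul]

lemma dualAct_dualAct (a b : H) (y : Module.Dual k V) :
    dualAct k H V b (dualAct k H V a y)
      = dualL y (HopfAlgebra.antipode (R := k) a * HopfAlgebra.antipode (R := k) b) := by
  unfold dualAct dualL
  simp [smulLin_mul, LinearMap.comp_assoc]

end AuxMod


/- STATEMENT 11: the composite of the Yetter–Drinfeld braidings
`c_{V,V̄} : V ⊗ V̄ → V̄ ⊗ V`, `v ⊗ y ↦ v₍₋₁₎ • y ⊗ v₍₀₎` and
`c_{V̄,V} : V̄ ⊗ V → V ⊗ V̄`, `y ⊗ v ↦ y₍₋₁₎ • v ⊗ y₍₀₎` is the identity on `V ⊗ V̄`.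
Here the coaction of `V` is `x ↦ R² ⊗ R¹ • x` and that of `V̄` is `y ↦ S(R¹) ⊗ R² • y`,
and the composite is written out using two arbitrary finite representations of the R-matrix
(one for each of the two braidings). -/
theorem braiding_composite_identity
    (k H : Type*) [CommRing k] [Ring H] [HopfAlgebra k H] (Q : QuasiTriangular k H)
    (V : Type*) [AddCommGroup V] [Module k V] [Module H V]
    [IsScalarTower k H V] [SMulCommClass k H V] [Module.Finite k V] [Module.Free k V]
    (x : V) (y : Module.Dual k V)
    (n : ℕ) (r1 r2 : Fin n → H) (hrep : (∑ i, r1 i ⊗ₜ[k] r2 i) = Q.R)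
    (m : ℕ) (s1 s2 : Fin m → H) (hrep' : (∑ j, s1 j ⊗ₜ[k] s2 j) = Q.R) :
    (∑ i, ∑ j,
        ((HopfAlgebra.antipode (R := k) (s1 j)) • ((r1 i) • x))
          ⊗ₜ[k] dualAct k H V (s2 j) (dualAct k H V (r2 i) y))
      = x ⊗ₜ[k] y := by
  have hN := QT_N Q r1 r2 hrep s1 s2 hrep'
  have key := congrArg (TensorProduct.map (actL (k := k) x) (dualL (k := k) (H := H) y)) hN
  simp only [map_sum, TensorProduct.map_tmul] at key
  calc (∑ i, ∑ j, ((HopfAlgebra.antipode (R := k) (s1 j)) • ((r1 i) • x))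
          ⊗ₜ[k] dualAct k H V (s2 j) (dualAct k H V (r2 i) y))
      = ∑ i, ∑ j, (actL (k := k) x) (HopfAlgebra.antipode (R := k) (s1 j) * r1 i)
          ⊗ₜ[k] (dualL (k := k) y) (HopfAlgebra.antipode (R := k) (r2 i) *
            HopfAlgebra.antipode (R := k) (s2 j)) := by
        refine Finset.sum_congr rfl fun i _ => Finset.sum_congr rfl fun j _ => ?_
        rw [dualAct_dualAct]
        congr 1
        exact (mul_smul _ _ x).symm
    _ = (actL (k := k) x) 1 ⊗ₜ[k] (dualL (k := k) y) 1 := key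
    _ = x ⊗ₜ[k] y := by
        simp [actL, dualL, smulLin_one]
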